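/- arXiv:2003.03908 — 3 statements merged into one kernel-verified Lean document; each statement's English description precedes it below -/
import Mathlib

section
/- Let Ω, g ∈ ℝ³ and ω, a : ℝ → ℝ³, and define g'(T) := W' T + f(T) + T U_t on SE₂(3), where W' = [[Ωₓ, g, 0₃ₓ₁],[0₂ₓ₃, 0₂ₓ₁, 0₂ₓ₁]], U_t = [[(ω_t)ₓ, a_t, 0₃ₓ₁],[0₂ₓ₃, 0₂ₓ₁, 0₂ₓ₁]], and f([[R, V, X],...]) = [[0₃, 0₃ₓ₁, V],[0₂ₓ₃, 0₂ₓ₁, 0₂ₓ₁]]. Then for every fixed t, g' is group affine: for all T, T̃ ∈ SE₂(3), g'(T T̃) = g'(T) T̃ + T g'(T̃) − T g'(I₅) T̃. -/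
open Matrix

noncomputable section

abbrev M3 := Matrix (Fin 3) (Fin 3) ℝ
abbrev M5 := Matrix (Fin 5) (Fin 5) ℝ
abbrev V3 := Fin 3 → ℝ
abbrev V9 := V3 × V3 × V3

/-- Skew-symmetric cross-product matrix `(ω)ₓ`. -/
def skew (ω : V3) : M3 := !![0, -ω 2, ω 1; ω 2, 0, -ω 0; -ω 1, ω 0, 0]

/-- 5×5 block matrix `[[A, v, x],[0₁ₓ₃, d, 0],[0₁ₓ₃, 0, e]]`. -/
def blk (A : M3) (v x : V3) (d e : ℝ) : M5 :=
  !![A 0 0, A 0 1, A 0 2, v 0, x 0;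
     A 1 0, A 1 1, A 1 2, v 1, x 1;
     A 2 0, A 2 1, A 2 2, v 2, x 2;
     0, 0, 0, d, 0;
     0, 0, 0, 0, e]

/-- Element of `SE₂(3)` built from rotation `R`, velocity `V`, position `X`. -/
def se23 (R : M3) (V X : V3) : M5 := blk R V X 1 1

/-- The hat map `ξ^∧` of `ξ = (ω, v, x) ∈ ℝ⁹`. -/
def hat (ω v x : V3) : M5 := blk (skew ω) v x 0 0

def hat9 (ξ : V9) : M5 := hat ξ.1 ξ.2.1 ξ.2.2

def IsSO3 (R : M3) : Prop := Rᵀ * R = 1 ∧ R.det = 1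

def IsSE23 (T : M5) : Prop := ∃ R V X, IsSO3 R ∧ T = se23 R V X

/-- Rotation block of a 5×5 matrix. -/
def Rof (T : M5) : M3 := Matrix.of fun i j => T (Fin.castLE (by omega) i) (Fin.castLE (by omega) j)

/-- Velocity column of a 5×5 matrix. -/
def Vof (T : M5) : V3 := fun i => T (Fin.castLE (by omega) i) 3

/-- Position column of a 5×5 matrix. -/
def Xof (T : M5) : V3 := fun i => T (Fin.castLE (by omega) i) 4

/-- Adjoint of `T ∈ SE₂(3)` acting on `ξ = (ω, v, x) ∈ ℝ⁹`:
  `[[R, 0, 0],[(V)ₓR, R, 0],[(X)ₓR, 0, R]]`. -/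
def Ad (T : M5) (ξ : V9) : V9 :=
  (Rof T *ᵥ ξ.1,
   (skew (Vof T) * Rof T) *ᵥ ξ.1 + Rof T *ᵥ ξ.2.1,
   (skew (Xof T) * Rof T) *ᵥ ξ.1 + Rof T *ᵥ ξ.2.2)

/-- `f(T)` : places the velocity column of `T` in the position column. -/
def fmap (T : M5) : M5 := blk 0 0 (Vof T) 0 0

/-- `Φ_t` : maps `[[R,V,X],...]` to `[[R,V,X+tV],...]` (acting on the top three rows). -/
def Phi (t : ℝ) (T : M5) : M5 :=
  Matrix.of fun i j => if (i : ℕ) < 3 ∧ (j : ℕ) = 4 then T i j + t * T i 3 else T i j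

/-- The linear map `F : (ω,v,x) ↦ (ω, v, x + Δt·v)`. -/
def Fmap (Δt : ℝ) (ξ : V9) : V9 := (ξ.1, ξ.2.1, ξ.2.2 + Δt • ξ.2.1)

lemma blk_mul_blk (A A' : M3) (v x v' x' : V3) (d e d' e' : ℝ) :
    blk A v x d e * blk A' v' x' d' e' =
      blk (A * A') (A *ᵥ v' + d' • v) (A *ᵥ x' + e' • x) (d * d') (e * e') := by
  ext i j
  fin_cases i <;> fin_cases j <;>
    simp [blk, Matrix.mul_apply, Fin.sum_univ_five, Matrix.mulVec, dotProduct,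
      Fin.sum_univ_three, Matrix.vecHead, Matrix.vecTail, Function.comp] <;> ring

lemma vof_blk (A : M3) (v x : V3) (d e : ℝ) : Vof (blk A v x d e) = v := by
  funext i
  fin_cases i <;> rfl

lemma fmap_blk (A : M3) (v x : V3) (d e : ℝ) : fmap (blk A v x d e) = blk 0 0 v 0 0 := by
  rw [fmap, vof_blk]

lemma blk_add (A A' : M3) (v x v' x' : V3) (d e d' e' : ℝ) :
    blk A v x d e + blk A' v' x' d' e' = blk (A + A') (v + v') (x + x') (d + d') (e + e') := by
  ext i j
  fin_cases i <;> fin_cases j <;>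
    simp [blk, Matrix.add_apply, Pi.add_apply, Matrix.vecHead, Matrix.vecTail, Function.comp]

lemma blk_sub (A A' : M3) (v x v' x' : V3) (d e d' e' : ℝ) :
    blk A v x d e - blk A' v' x' d' e' = blk (A - A') (v - v') (x - x') (d - d') (e - e') := by
  ext i j
  fin_cases i <;> fin_cases j <;>
    simp [blk, Matrix.sub_apply, Pi.sub_apply, Matrix.vecHead, Matrix.vecTail, Function.comp]

lemma blk_congr {A A' : M3} {v x v' x' : V3} {d e d' e' : ℝ}
    (h1 : A = A') (h2 : v = v') (h3 : x = x') (h4 : d = d') (h5 : e = e') :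
    blk A v x d e = blk A' v' x' d' e' := by
  subst h1 h2 h3 h4 h5; rfl

lemma blk_one : (1 : M5) = blk 1 0 0 1 1 := by
  ext i j
  fin_cases i <;> fin_cases j <;> simp [blk, Matrix.one_apply, Matrix.vecHead, Matrix.vecTail, Function.comp]

/-- the rotating-Earth IMU dynamics `g'(T) = W' T + f(T) + T U_t`
is group affine on `SE₂(3)`. -/
theorem stmt_8 (Ω g : V3) (ω a : ℝ → V3) (t : ℝ) :
    ∀ T T' : M5, IsSE23 T → IsSE23 T' →
      let W' : M5 := blk (skew Ω) g 0 0 0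
      let U : M5 := blk (skew (ω t)) (a t) 0 0 0
      let g' : M5 → M5 := fun S => W' * S + fmap S + S * U
      g' (T * T') = g' T * T' + T * g' T' - T * g' 1 * T' := by
  rintro T T' ⟨R, V, X, -, rfl⟩ ⟨R', V', X', -, rfl⟩
  intro W' U g'
  simp only [g', W', U, se23, blk_one, blk_mul_blk, fmap_blk, blk_add, blk_sub]
  refine blk_congr ?_ ?_ ?_ (by norm_num) (by norm_num)
  · noncomm_ring
  · funext i
    fin_cases i <;>
      simp [Matrix.mulVec, dotProduct, Matrix.mul_apply, Fin.sum_univ_three,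
        Pi.add_apply, Pi.sub_apply, Pi.smul_apply, Matrix.add_apply, Matrix.sub_apply,
        Matrix.one_apply] <;> ring
  · funext i
    fin_cases i <;>
      simp [Matrix.mulVec, dotProduct, Matrix.mul_apply, Fin.sum_univ_three,
        Pi.add_apply, Pi.sub_apply, Pi.smul_apply, Matrix.add_apply, Matrix.sub_apply,
        Matrix.one_apply] <;> ring
end
end

section
/- Fix Δt ∈ ℝ, let F : ℝ⁹ → ℝ⁹ be the linear map (ω, v, x) ↦ (ω, v, x + Δt·v), let Υ ∈ SE₂(3), and let Φ = Φ_Δt. Then for every ξ ∈ ℝ⁹, Υ⁻¹ Φ(exp_m(ξ^∧)) Υ = exp_m((Ad_{Υ⁻¹} F ξ)^∧). -/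
open Matrix

noncomputable section

/- ======================= auxiliary lemmas ======================= -/

lemma se23_mul_se23 (R V X R' V' X') :
    se23 R V X * se23 R' V' X' = se23 (R * R') (R *ᵥ V' + V) (R *ᵥ X' + X) := by
  ext i j
  fin_cases i <;> fin_cases j <;>
    simp [se23, blk, Matrix.mul_apply, Matrix.mulVec, dotProduct,
      Fin.sum_univ_five, Fin.sum_univ_three, Matrix.vecHead, Matrix.vecTail]

lemma se23_one : se23 1 0 0 = 1 := by
  ext i j
  fin_cases i <;> fin_cases j <;>
    simp [se23, blk, Matrix.one_apply, Matrix.vecHead, Matrix.vecTail]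

lemma blk_mul_se23 (A : M3) (v x V X : V3) (R : M3) :
    blk A v x 0 0 * se23 R V X = blk (A * R) (A *ᵥ V + v) (A *ᵥ X + x) 0 0 := by
  ext i j
  fin_cases i <;> fin_cases j <;>
    simp [se23, blk, Matrix.mul_apply, Matrix.mulVec, dotProduct,
      Fin.sum_univ_five, Fin.sum_univ_three, Matrix.vecHead, Matrix.vecTail] <;> ring

lemma se23_mul_blk (R' : M3) (V' X' : V3) (A : M3) (v x : V3) :
    se23 R' V' X' * blk A v x 0 0 = blk (R' * A) (R' *ᵥ v) (R' *ᵥ x) 0 0 := by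
  ext i j
  fin_cases i <;> fin_cases j <;>
    simp [se23, blk, Matrix.mul_apply, Matrix.mulVec, dotProduct,
      Fin.sum_univ_five, Fin.sum_univ_three, Matrix.vecHead, Matrix.vecTail] <;> ring

lemma skew_neg' (a : V3) : skew (-a) = -skew a := by
  ext i j
  fin_cases i <;> fin_cases j <;> simp [skew]

lemma skew_anticomm' (a b : V3) : skew a *ᵥ b = -(skew b *ᵥ a) := by
  ext i
  fin_cases i <;>
    simp [skew, Matrix.mulVec, dotProduct, Fin.sum_univ_three,
      Matrix.vecHead, Matrix.vecTail] <;> ring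

lemma vec3_eta (a : V3) : a = ![a 0, a 1, a 2] := by
  ext k; fin_cases k <;> rfl

lemma skew_conj_lit (a b c d e f g h i w0 w1 w2 : ℝ)
    (hdet : Matrix.det !![a,b,c;d,e,f;g,h,i] = 1)
    (h2 : !![a,b,c;d,e,f;g,h,i] * !![a,b,c;d,e,f;g,h,i]ᵀ = 1) :
    !![a,b,c;d,e,f;g,h,i]ᵀ * skew ![w0,w1,w2] * !![a,b,c;d,e,f;g,h,i]
      = skew (!![a,b,c;d,e,f;g,h,i]ᵀ *ᵥ ![w0,w1,w2]) := by
  set M : M3 := !![a,b,c;d,e,f;g,h,i] with hM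
  have hadj : M.adjugate = Mᵀ := by
    calc M.adjugate = M.adjugate * (M * Mᵀ) := by rw [h2, mul_one]
    _ = M.adjugate * M * Mᵀ := by rw [mul_assoc]
    _ = Mᵀ := by rw [Matrix.adjugate_mul, hdet, one_smul, Matrix.one_mul]
  rw [hM, Matrix.adjugate_fin_three] at hadj
  have c00 : e * i - f * h = a := by
    have h := congrFun (congrFun hadj 0) 0; simp at h; linear_combination h
  have c01 : -(b * i) + c * h = d := by
    have h := congrFun (congrFun hadj 0) 1; simp at h; linear_combination h
  have c02 : b * f - c * e = g := by
    have h := congrFun (congrFun hadj 0) 2; simp at h; linear_combination h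
  have c10 : -(d * i) + f * g = b := by
    have h := congrFun (congrFun hadj 1) 0; simp at h; linear_combination h
  have c11 : a * i - c * g = e := by
    have h := congrFun (congrFun hadj 1) 1; simp at h; linear_combination h
  have c12 : -(a * f) + c * d = h := by
    have h := congrFun (congrFun hadj 1) 2; simp at h; linear_combination h
  have c20 : d * h - e * g = c := by
    have h := congrFun (congrFun hadj 2) 0; simp at h; linear_combination h
  have c21 : -(a * h) + b * g = f := by
    have h := congrFun (congrFun hadj 2) 1; simp at h; linear_combination h
  have c22 : a * e - b * d = i := by
    have h := congrFun (congrFun hadj 2) 2; simp at h; linear_combination h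
  ext x y
  fin_cases x <;> fin_cases y <;>
    simp [hM, skew, Matrix.mul_apply, Matrix.mulVec, dotProduct, Fin.sum_univ_three,
      Matrix.transpose_apply, Matrix.vecHead, Matrix.vecTail]
  · ring
  · linear_combination (-w0) * c20 + (-w1) * c21 + (-w2) * c22
  · linear_combination w0 * c10 + w1 * c11 + w2 * c12
  · linear_combination w0 * c20 + w1 * c21 + w2 * c22
  · ring
  · linear_combination (-w0) * c00 + (-w1) * c01 + (-w2) * c02
  · linear_combination (-w0) * c10 + (-w1) * c11 + (-w2) * c12
  · linear_combination w0 * c00 + w1 * c01 + w2 * c02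
  · ring

lemma skew_conj (R : M3) (hdet : R.det = 1) (h2 : R * Rᵀ = 1) (ω : V3) :
    Rᵀ * skew ω * R = skew (Rᵀ *ᵥ ω) := by
  have hRe := Matrix.eta_fin_three R
  have hωe := vec3_eta ω
  rw [hRe] at h2 hdet
  rw [hRe, hωe]
  exact skew_conj_lit _ _ _ _ _ _ _ _ _ _ _ _ hdet h2


def Pmat (t : ℝ) : M5 := !![1,0,0,0,0; 0,1,0,0,0; 0,0,1,0,0; 0,0,0,1,t; 0,0,0,0,1]

lemma Pmat_mul (s t : ℝ) : Pmat s * Pmat t = Pmat (s + t) := by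
  ext i j
  fin_cases i <;> fin_cases j <;>
    simp [Pmat, Matrix.mul_apply, Fin.sum_univ_five, Matrix.vecHead, Matrix.vecTail] <;> ring

lemma Pmat_zero : Pmat 0 = 1 := by
  ext i j
  fin_cases i <;> fin_cases j <;>
    simp [Pmat, Matrix.one_apply, Matrix.vecHead, Matrix.vecTail]

lemma hat_mul_Pmat (t : ℝ) (ω v x : V3) :
    hat ω v x * Pmat t = hat ω v (x + t • v) := by
  ext i j
  fin_cases i <;> fin_cases j <;>
    simp [Pmat, hat, blk, skew, Matrix.mul_apply, Fin.sum_univ_five,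
      Matrix.vecHead, Matrix.vecTail, Pi.add_apply, Pi.smul_apply, smul_eq_mul] <;> ring

lemma Pmat_mul_hat (s : ℝ) (ω v x : V3) :
    Pmat s * hat ω v x = hat ω v x := by
  ext i j
  fin_cases i <;> fin_cases j <;>
    simp [Pmat, hat, blk, skew, Matrix.mul_apply, Fin.sum_univ_five,
      Matrix.vecHead, Matrix.vecTail]

lemma Pmat_conj_hat (t : ℝ) (ξ : V9) :
    Pmat (-t) * hat9 ξ * Pmat t = hat9 (Fmap t ξ) := by
  obtain ⟨ω, v, x⟩ := ξ
  show Pmat (-t) * hat ω v x * Pmat t = hat ω v (x + t • v)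
  rw [Pmat_mul_hat, hat_mul_Pmat]

def Qmat : M5 := !![0,0,0,0,0; 0,0,0,0,0; 0,0,0,0,0; 0,0,0,1,0; 0,0,0,0,1]

lemma Qmat_mul_hat9 (ξ : V9) : Qmat * hat9 ξ = 0 := by
  obtain ⟨ω, v, x⟩ := ξ
  ext i j
  fin_cases i <;> fin_cases j <;>
    simp [Qmat, hat9, hat, blk, skew, Matrix.mul_apply, Fin.sum_univ_five,
      Matrix.vecHead, Matrix.vecTail]

lemma Qmat_mul_exp (A : M5) (h : Qmat * A = 0) :
    Qmat * NormedSpace.exp A = Qmat := by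
  letI : SeminormedRing M5 := Matrix.linftyOpSemiNormedRing
  letI : NormedRing M5 := Matrix.linftyOpNormedRing
  letI : NormedAlgebra ℝ M5 := Matrix.linftyOpNormedAlgebra
  have hs : Summable (fun n : ℕ => ((Nat.factorial n : ℝ))⁻¹ • A ^ n) :=
    NormedSpace.expSeries_summable' A
  rw [NormedSpace.exp_eq_tsum (𝕂 := ℝ), ← hs.tsum_mul_left Qmat, tsum_eq_single 0]
  · simp
  · intro n hn
    obtain ⟨m, rfl⟩ := Nat.exists_eq_succ_of_ne_zero hn
    rw [mul_smul_comm, pow_succ', ← mul_assoc, h, zero_mul, smul_zero]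

set_option maxHeartbeats 2000000 in
lemma Phi_eq (t : ℝ) (E : M5)
    (h30 : E 3 0 = 0) (h31 : E 3 1 = 0) (h32 : E 3 2 = 0) (h33 : E 3 3 = 1) (h34 : E 3 4 = 0)
    (h40 : E 4 0 = 0) (h41 : E 4 1 = 0) (h42 : E 4 2 = 0) (h43 : E 4 3 = 0) (h44 : E 4 4 = 1) :
    Phi t E = Pmat (-t) * E * Pmat t := by
  have hE : E = !![E 0 0, E 0 1, E 0 2, E 0 3, E 0 4;
                   E 1 0, E 1 1, E 1 2, E 1 3, E 1 4;
                   E 2 0, E 2 1, E 2 2, E 2 3, E 2 4;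
                   0, 0, 0, 1, 0;
                   0, 0, 0, 0, 1] := by
    ext i j
    fin_cases i <;> fin_cases j <;>
      first
        | rfl
        | exact h30 | exact h31 | exact h32 | exact h33 | exact h34
        | exact h40 | exact h41 | exact h42 | exact h43 | exact h44
  rw [hE]
  ext i j
  fin_cases i <;> fin_cases j <;>
    simp [Phi, Pmat, Matrix.mul_apply, Fin.sum_univ_five,
      Matrix.vecHead, Matrix.vecTail,
      show ((0:Fin 5):ℕ) = 0 from rfl, show ((1:Fin 5):ℕ) = 1 from rfl,
      show ((2:Fin 5):ℕ) = 2 from rfl, show ((3:Fin 5):ℕ) = 3 from rfl,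
      show ((4:Fin 5):ℕ) = 4 from rfl] <;> ring

lemma Rof_se23 (R : M3) (V X : V3) : Rof (se23 R V X) = R := by
  ext i j; fin_cases i <;> fin_cases j <;> rfl

lemma Vof_se23 (R : M3) (V X : V3) : Vof (se23 R V X) = V := by
  ext i; fin_cases i <;> rfl

lemma Xof_se23 (R : M3) (V X : V3) : Xof (se23 R V X) = X := by
  ext i; fin_cases i <;> rfl

lemma hat_Ad (R : M3) (V X : V3) (hdet : R.det = 1) (h2 : R * Rᵀ = 1) (ξ : V9) :
    hat9 (Ad (se23 Rᵀ (-(Rᵀ *ᵥ V)) (-(Rᵀ *ᵥ X))) ξ)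
      = se23 Rᵀ (-(Rᵀ *ᵥ V)) (-(Rᵀ *ᵥ X)) * hat9 ξ * se23 R V X := by
  obtain ⟨ω, v, x⟩ := ξ
  have key : ∀ a : V3, (skew (-(Rᵀ *ᵥ a)) * Rᵀ) *ᵥ ω = (Rᵀ * skew ω) *ᵥ a := by
    intro a
    calc (skew (-(Rᵀ *ᵥ a)) * Rᵀ) *ᵥ ω = skew (-(Rᵀ *ᵥ a)) *ᵥ (Rᵀ *ᵥ ω) := by
          rw [Matrix.mulVec_mulVec]
    _ = (-(skew (Rᵀ *ᵥ a))) *ᵥ (Rᵀ *ᵥ ω) := by rw [skew_neg']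
    _ = -(skew (Rᵀ *ᵥ a) *ᵥ (Rᵀ *ᵥ ω)) := Matrix.neg_mulVec _ _
    _ = skew (Rᵀ *ᵥ ω) *ᵥ (Rᵀ *ᵥ a) := by rw [skew_anticomm' (Rᵀ *ᵥ a) (Rᵀ *ᵥ ω), neg_neg]
    _ = (Rᵀ * skew ω * R) *ᵥ (Rᵀ *ᵥ a) := by rw [skew_conj R hdet h2]
    _ = (Rᵀ * skew ω * R * Rᵀ) *ᵥ a := by rw [Matrix.mulVec_mulVec]
    _ = (Rᵀ * skew ω) *ᵥ a := by rw [mul_assoc (Rᵀ * skew ω) R Rᵀ, h2, mul_one]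
  show hat (Rᵀ *ᵥ ω) _ _ = _
  rw [hat9]
  show hat (Rof (se23 Rᵀ (-(Rᵀ *ᵥ V)) (-(Rᵀ *ᵥ X))) *ᵥ ω)
      ((skew (Vof (se23 Rᵀ (-(Rᵀ *ᵥ V)) (-(Rᵀ *ᵥ X)))) *
          Rof (se23 Rᵀ (-(Rᵀ *ᵥ V)) (-(Rᵀ *ᵥ X)))) *ᵥ ω +
        Rof (se23 Rᵀ (-(Rᵀ *ᵥ V)) (-(Rᵀ *ᵥ X))) *ᵥ v)
      ((skew (Xof (se23 Rᵀ (-(Rᵀ *ᵥ V)) (-(Rᵀ *ᵥ X)))) *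
          Rof (se23 Rᵀ (-(Rᵀ *ᵥ V)) (-(Rᵀ *ᵥ X)))) *ᵥ ω +
        Rof (se23 Rᵀ (-(Rᵀ *ᵥ V)) (-(Rᵀ *ᵥ X))) *ᵥ x)
      = _
  rw [Rof_se23, Vof_se23, Xof_se23]
  show hat (Rᵀ *ᵥ ω) _ _ = se23 Rᵀ (-(Rᵀ *ᵥ V)) (-(Rᵀ *ᵥ X)) * hat ω v x * se23 R V X
  rw [hat, hat, se23_mul_blk, blk_mul_se23]
  rw [skew_conj R hdet h2, key V, key X]

/-- `Υ⁻¹ Φ(exp_m(ξ^∧)) Υ = exp_m((Ad_{Υ⁻¹} F ξ)^∧)`. -/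
theorem stmt_12 (Δt : ℝ) (Υ : M5) (hΥ : IsSE23 Υ) (ξ : V9) :
    Υ⁻¹ * Phi Δt (NormedSpace.exp (hat9 ξ)) * Υ
      = NormedSpace.exp (hat9 (Ad Υ⁻¹ (Fmap Δt ξ))) := by
  obtain ⟨R, V, X, ⟨h1, hdet⟩, rfl⟩ := hΥ
  have h2 : R * Rᵀ = 1 := mul_eq_one_comm.mp h1
  have hWΥ : se23 Rᵀ (-(Rᵀ *ᵥ V)) (-(Rᵀ *ᵥ X)) * se23 R V X = 1 := by
    rw [se23_mul_se23, h1]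
    rw [show Rᵀ *ᵥ V + -(Rᵀ *ᵥ V) = 0 from add_neg_cancel _,
        show Rᵀ *ᵥ X + -(Rᵀ *ᵥ X) = 0 from add_neg_cancel _, se23_one]
  have hΥW : se23 R V X * se23 Rᵀ (-(Rᵀ *ᵥ V)) (-(Rᵀ *ᵥ X)) = 1 := by
    rw [se23_mul_se23, h2]
    rw [show R *ᵥ (-(Rᵀ *ᵥ V)) + V = 0 by
          rw [Matrix.mulVec_neg, Matrix.mulVec_mulVec, h2, Matrix.one_mulVec, neg_add_cancel],
        show R *ᵥ (-(Rᵀ *ᵥ X)) + X = 0 by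
          rw [Matrix.mulVec_neg, Matrix.mulVec_mulVec, h2, Matrix.one_mulVec, neg_add_cancel],
        se23_one]
  have hinv : (se23 R V X)⁻¹ = se23 Rᵀ (-(Rᵀ *ᵥ V)) (-(Rᵀ *ᵥ X)) :=
    Matrix.inv_eq_left_inv hWΥ
  set E := NormedSpace.exp (hat9 ξ) with hEdef
  have hQE : Qmat * E = Qmat := Qmat_mul_exp _ (Qmat_mul_hat9 ξ)
  have hrow : ∀ (i : Fin 5) (j : Fin 5), E i j = E i j := fun _ _ => rfl
  have hfact : ∀ (i j : Fin 5), Qmat i j = (Qmat * E) i j := fun i j => by rw [hQE]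
  have h30 : E 3 0 = 0 := by
    have := (hfact 3 0).symm
    simpa [Qmat, Matrix.mul_apply, Fin.sum_univ_five, Matrix.vecHead, Matrix.vecTail] using this
  have h31 : E 3 1 = 0 := by
    have := (hfact 3 1).symm
    simpa [Qmat, Matrix.mul_apply, Fin.sum_univ_five, Matrix.vecHead, Matrix.vecTail] using this
  have h32 : E 3 2 = 0 := by
    have := (hfact 3 2).symm
    simpa [Qmat, Matrix.mul_apply, Fin.sum_univ_five, Matrix.vecHead, Matrix.vecTail] using this
  have h33 : E 3 3 = 1 := by
    have := (hfact 3 3).symm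
    simpa [Qmat, Matrix.mul_apply, Fin.sum_univ_five, Matrix.vecHead, Matrix.vecTail] using this
  have h34 : E 3 4 = 0 := by
    have := (hfact 3 4).symm
    simpa [Qmat, Matrix.mul_apply, Fin.sum_univ_five, Matrix.vecHead, Matrix.vecTail] using this
  have h40 : E 4 0 = 0 := by
    have := (hfact 4 0).symm
    simpa [Qmat, Matrix.mul_apply, Fin.sum_univ_five, Matrix.vecHead, Matrix.vecTail] using this
  have h41 : E 4 1 = 0 := by
    have := (hfact 4 1).symm
    simpa [Qmat, Matrix.mul_apply, Fin.sum_univ_five, Matrix.vecHead, Matrix.vecTail] using this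
  have h42 : E 4 2 = 0 := by
    have := (hfact 4 2).symm
    simpa [Qmat, Matrix.mul_apply, Fin.sum_univ_five, Matrix.vecHead, Matrix.vecTail] using this
  have h43 : E 4 3 = 0 := by
    have := (hfact 4 3).symm
    simpa [Qmat, Matrix.mul_apply, Fin.sum_univ_five, Matrix.vecHead, Matrix.vecTail] using this
  have h44 : E 4 4 = 1 := by
    have := (hfact 4 4).symm
    simpa [Qmat, Matrix.mul_apply, Fin.sum_univ_five, Matrix.vecHead, Matrix.vecTail] using this
  have hPhi : Phi Δt E = Pmat (-Δt) * E * Pmat Δt :=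
    Phi_eq Δt E h30 h31 h32 h33 h34 h40 h41 h42 h43 h44
  let U2 : M5ˣ :=
    ⟨Pmat Δt, Pmat (-Δt),
     by rw [Pmat_mul, add_neg_cancel, Pmat_zero],
     by rw [Pmat_mul, neg_add_cancel, Pmat_zero]⟩
  have hconj2 : Pmat (-Δt) * E * Pmat Δt = NormedSpace.exp (hat9 (Fmap Δt ξ)) := by
    have hc := Matrix.exp_units_conj' U2 (hat9 ξ)
    have e1 : (↑U2⁻¹ : M5) = Pmat (-Δt) := rfl
    have e2 : (↑U2 : M5) = Pmat Δt := rfl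
    rw [e1, e2] at hc
    rw [← hEdef] at hc
    rw [← hc, Pmat_conj_hat]
  let U1 : M5ˣ := ⟨se23 R V X, se23 Rᵀ (-(Rᵀ *ᵥ V)) (-(Rᵀ *ᵥ X)), hΥW, hWΥ⟩
  have hconj1 : NormedSpace.exp (hat9 (Ad (se23 Rᵀ (-(Rᵀ *ᵥ V)) (-(Rᵀ *ᵥ X))) (Fmap Δt ξ)))
      = se23 Rᵀ (-(Rᵀ *ᵥ V)) (-(Rᵀ *ᵥ X)) * NormedSpace.exp (hat9 (Fmap Δt ξ)) * se23 R V X := by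
    rw [hat_Ad R V X hdet h2 (Fmap Δt ξ)]
    have hc := Matrix.exp_units_conj' U1 (hat9 (Fmap Δt ξ))
    have e1 : (↑U1⁻¹ : M5) = se23 Rᵀ (-(Rᵀ *ᵥ V)) (-(Rᵀ *ᵥ X)) := rfl
    have e2 : (↑U1 : M5) = se23 R V X := rfl
    rw [e1, e2] at hc
    exact hc
  rw [hinv, hPhi, hconj2, hconj1]
end
end

section
/- (Exact one-step bias discrepancy propagation.) Fix Δt ∈ ℝ and let F : ℝ⁹ → ℝ⁹ be the linear map (ω, v, x) ↦ (ω, v, x + Δt·v), and Φ = Φ_Δt. Let T_k(b̄), Υ(b̄) ∈ SE₂(3), let d_k, δ ∈ ℝ⁹, let Γ be an invertible 5×5 real matrix, and define T_k(b̂) := T_k(b̄) exp_m(d_k^∧) and Υ(b̂) := Υ(b̄) exp_m(δ^∧). Then Γ Φ(T_k(b̂)) Υ(b̂) = (Γ Φ(T_k(b̄)) Υ(b̄)) · exp_m((Ad_{Υ(b̄)⁻¹} F d_k)^∧) · exp_m(δ^∧). -/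
open Matrix

noncomputable section

/-!
For a matrix whose last two rows are those of the identity, `Φ_Δt` is conjugation by the shear
`C = 1 + Δt E₃₄` (indices from 0), and `C⁻¹ ξ^∧ C = (F ξ)^∧`. Since the last rows of `d^∧` vanish,
`exp_m(d^∧)` again has standard last rows, so `Φ(T exp_m(d^∧)) = Φ(T) exp_m((F d)^∧)`.
For `Υ ∈ SE₂(3)` one has `Υ⁻¹ ξ^∧ Υ = (Ad_{Υ⁻¹} ξ)^∧`, which rests on
`(R ω)ₓ R = R (ω)ₓ` for `R ∈ SO(3)`; as `exp_m` commutes with conjugation, inserting `Υ Υ⁻¹`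
gives the identity.
-/

theorem mul_exp_eq_self_of_mul_eq_zero {𝔸 : Type*} [NormedRing 𝔸] [NormedAlgebra ℚ 𝔸]
    [CompleteSpace 𝔸] {q x : 𝔸} (h : q * x = 0) : q * NormedSpace.exp x = q := by
  have hsum := (NormedSpace.exp_series_hasSum_exp' (𝕂 := ℚ) x).mul_left q
  have hterm : ∀ n ≠ 0, q * ((n.factorial : ℚ)⁻¹ • x ^ n) = 0 := by
    intro n hn
    obtain ⟨m, rfl⟩ := Nat.exists_eq_succ_of_ne_zero hn
    rw [mul_smul_comm, pow_succ', ← mul_assoc, h, zero_mul, smul_zero]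
  simpa using hsum.unique (hasSum_single 0 hterm)

theorem skew_mulVec (a b : V3) : skew a *ᵥ b = a ⨯₃ b := by
  ext i; fin_cases i <;> simp [skew, cross_apply, mulVec, dotProduct, Fin.sum_univ_three] <;> ring

theorem transpose_mul_skew_mulVec_mul (A : M3) (ω : V3) :
    Aᵀ * skew (A *ᵥ ω) * A = A.det • skew ω := by
  ext i j
  fin_cases i <;> fin_cases j <;>
    simp [skew, Matrix.mul_apply, Fin.sum_univ_three, mulVec, dotProduct, Matrix.det_fin_three] <;>
    ring

theorem IsSO3.mul_transpose {R : M3} (hR : IsSO3 R) : R * Rᵀ = 1 :=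
  mul_eq_one_comm.mp hR.1

theorem IsSO3.transpose {R : M3} (hR : IsSO3 R) : IsSO3 Rᵀ :=
  ⟨by rw [transpose_transpose, hR.mul_transpose], by rw [det_transpose, hR.2]⟩

theorem IsSO3.skew_mulVec_mul {R : M3} (hR : IsSO3 R) (ω : V3) :
    skew (R *ᵥ ω) * R = R * skew ω :=
  calc skew (R *ᵥ ω) * R = R * (Rᵀ * skew (R *ᵥ ω) * R) := by
        rw [← mul_assoc, ← mul_assoc, hR.mul_transpose, one_mul]
    _ = R * skew ω := by rw [transpose_mul_skew_mulVec_mul, hR.2, one_smul]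

-- `blk` together with the entry `z` at position (3,4), so that shears and products stay in the family.
def blk5 (A : M3) (v x : V3) (d z e : ℝ) : M5 :=
  !![A 0 0, A 0 1, A 0 2, v 0, x 0;
     A 1 0, A 1 1, A 1 2, v 1, x 1;
     A 2 0, A 2 1, A 2 2, v 2, x 2;
     0, 0, 0, d, z;
     0, 0, 0, 0, e]

theorem blk5_mul (A B : M3) (v x w y : V3) (d z e c u f : ℝ) :
    blk5 A v x d z e * blk5 B w y c u f
      = blk5 (A * B) (A *ᵥ w + c • v) (A *ᵥ y + u • v + f • x) (d * c) (d * u + z * f) (e * f) := by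
  ext i j
  fin_cases i <;> fin_cases j <;>
    simp [blk5, Matrix.mul_apply, Fin.sum_univ_five, mulVec, dotProduct, Fin.sum_univ_three] <;> ring

theorem blk5_one : blk5 1 0 0 1 0 1 = 1 := by
  ext i j; fin_cases i <;> fin_cases j <;> simp [blk5]

theorem hat9_eq_blk5 (ξ : V9) : hat9 ξ = blk5 (skew ξ.1) ξ.2.1 ξ.2.2 0 0 0 := rfl

theorem se23_eq_blk5 (R : M3) (V X : V3) : se23 R V X = blk5 R V X 1 0 1 := rfl

theorem Phi_blk5 (t : ℝ) (A : M3) (v x : V3) (d z e : ℝ) :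
    Phi t (blk5 A v x d z e) = blk5 A v (x + t • v) d z e := by
  ext i j; fin_cases i <;> fin_cases j <;> simp [Phi, blk5]

theorem Rof_blk5 (A : M3) (v x : V3) (d z e : ℝ) : Rof (blk5 A v x d z e) = A := by
  ext i j; fin_cases i <;> fin_cases j <;> rfl

theorem Vof_blk5 (A : M3) (v x : V3) (d z e : ℝ) : Vof (blk5 A v x d z e) = v := by
  ext i; fin_cases i <;> rfl

theorem Xof_blk5 (A : M3) (v x : V3) (d z e : ℝ) : Xof (blk5 A v x d z e) = x := by
  ext i; fin_cases i <;> rfl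

theorem se23_mul_se23_transpose {R : M3} (hR : IsSO3 R) (V X : V3) :
    se23 R V X * se23 Rᵀ (-(Rᵀ *ᵥ V)) (-(Rᵀ *ᵥ X)) = 1 := by
  simp [se23_eq_blk5, blk5_mul, mulVec_neg, mulVec_mulVec, hR.mul_transpose, blk5_one]

theorem IsSE23.isUnit {T : M5} (hT : IsSE23 T) : IsUnit T := by
  obtain ⟨R, V, X, hR, rfl⟩ := hT
  exact IsUnit.of_mul_eq_one _ (se23_mul_se23_transpose hR V X)

theorem IsSE23.inv {T : M5} (hT : IsSE23 T) : IsSE23 T⁻¹ := by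
  obtain ⟨R, V, X, hR, rfl⟩ := hT
  exact ⟨_, _, _, hR.transpose, Matrix.inv_eq_right_inv (se23_mul_se23_transpose hR V X)⟩

theorem IsSE23.hat9_Ad_mul {T : M5} (hT : IsSE23 T) (ξ : V9) :
    hat9 (Ad T ξ) * T = T * hat9 ξ := by
  obtain ⟨R, V, X, hR, rfl⟩ := hT
  simp [Ad, se23_eq_blk5, hat9_eq_blk5, Rof_blk5, Vof_blk5, Xof_blk5, blk5_mul, skew_mulVec,
    hR.skew_mulVec_mul, ← mulVec_mulVec, ← add_assoc, cross_anticomm']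

theorem IsSE23.hat9_Ad {T : M5} (hT : IsSE23 T) (ξ : V9) :
    hat9 (Ad T ξ) = T * hat9 ξ * T⁻¹ := by
  rw [← hT.hat9_Ad_mul,
    Matrix.mul_nonsing_inv_cancel_right _ _ ((Matrix.isUnit_iff_isUnit_det _).mp hT.isUnit)]

-- `botProj * M = botProj` says that the last two rows of `M` are those of the identity.
def botProj : M5 := blk5 0 0 0 1 0 1

theorem eq_blk5_of_botProj_mul {M : M5} (h : botProj * M = botProj) :
    M = blk5 (Rof M) (Vof M) (Xof M) 1 0 1 := by
  ext i j
  have hij := congrFun (congrFun h i) j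
  fin_cases i <;> fin_cases j <;>
    simp [botProj, blk5, Rof, Vof, Xof, Matrix.mul_apply, Fin.sum_univ_five] at hij ⊢ <;> exact hij

theorem IsSE23.botProj_mul {T : M5} (hT : IsSE23 T) : botProj * T = botProj := by
  obtain ⟨R, V, X, -, rfl⟩ := hT
  simp [botProj, se23_eq_blk5, blk5_mul]

theorem botProj_mul_exp_hat9 (ξ : V9) : botProj * NormedSpace.exp (hat9 ξ) = botProj := by
  have h : botProj * hat9 ξ = 0 := by
    ext i j
    fin_cases i <;> fin_cases j <;>
      simp [botProj, hat9_eq_blk5, blk5, Matrix.mul_apply, Fin.sum_univ_five]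
  open scoped Norms.Operator in exact mul_exp_eq_self_of_mul_eq_zero h

def shear (t : ℝ) : M5 := blk5 1 0 0 1 t 1

theorem shear_mul_shear (s t : ℝ) : shear s * shear t = shear (s + t) := by
  simp [shear, blk5_mul, add_comm]

theorem shear_zero : shear 0 = 1 := blk5_one

theorem shear_mul_shear_neg (t : ℝ) : shear t * shear (-t) = 1 := by
  rw [shear_mul_shear, add_neg_cancel, shear_zero]

theorem inv_shear (t : ℝ) : (shear t)⁻¹ = shear (-t) :=
  Matrix.inv_eq_right_inv (shear_mul_shear_neg t)

theorem isUnit_shear (t : ℝ) : IsUnit (shear t) :=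
  IsUnit.of_mul_eq_one _ (shear_mul_shear_neg t)

-- Right multiplication by `shear t` adds `t` times column 3 to column 4; the left factor restores
-- row 3.
theorem Phi_eq_shear_conj (t : ℝ) {M : M5} (hM : botProj * M = botProj) :
    Phi t M = (shear t)⁻¹ * M * shear t := by
  rw [eq_blk5_of_botProj_mul hM, inv_shear, Phi_blk5]
  simp [shear, blk5_mul, add_comm]

theorem hat9_Fmap (t : ℝ) (ξ : V9) : hat9 (Fmap t ξ) = (shear t)⁻¹ * hat9 ξ * shear t := by
  rw [inv_shear]
  simp [shear, hat9_eq_blk5, Fmap, blk5_mul, add_comm]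

theorem Phi_mul_exp_hat9 (t : ℝ) {T : M5} (hT : botProj * T = botProj) (ξ : V9) :
    Phi t (T * NormedSpace.exp (hat9 ξ)) = Phi t T * NormedSpace.exp (hat9 (Fmap t ξ)) := by
  have hTE : botProj * (T * NormedSpace.exp (hat9 ξ)) = botProj := by
    rw [← mul_assoc, hT, botProj_mul_exp_hat9]
  rw [Phi_eq_shear_conj t hTE, Phi_eq_shear_conj t hT, hat9_Fmap,
    Matrix.exp_conj' _ _ (isUnit_shear t)]
  simp only [mul_assoc,
    Matrix.mul_nonsing_inv_cancel_left _ _ ((Matrix.isUnit_iff_isUnit_det _).mp (isUnit_shear t))]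

theorem stmt_16_general (Δt : ℝ) (Tk Υ : M5) (hT : IsSE23 Tk) (hΥ : IsSE23 Υ)
    (Γ : M5) (d δ : V9) :
    Γ * Phi Δt (Tk * NormedSpace.exp (hat9 d)) * (Υ * NormedSpace.exp (hat9 δ))
      = (Γ * Phi Δt Tk * Υ)
          * NormedSpace.exp (hat9 (Ad Υ⁻¹ (Fmap Δt d)))
          * NormedSpace.exp (hat9 δ) := by
  have hΥdet : IsUnit Υ.det := (Matrix.isUnit_iff_isUnit_det _).mp hΥ.isUnit
  have hconj : ∀ η : V9,
      NormedSpace.exp (hat9 (Ad Υ⁻¹ η)) = Υ⁻¹ * NormedSpace.exp (hat9 η) * Υ := by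
    intro η
    rw [hΥ.inv.hat9_Ad, Matrix.nonsing_inv_nonsing_inv _ hΥdet, Matrix.exp_conj' _ _ hΥ.isUnit]
  rw [Phi_mul_exp_hat9 Δt hT.botProj_mul, hconj]
  simp only [mul_assoc, Matrix.mul_nonsing_inv_cancel_left _ _ hΥdet]

/-- exact one-step bias discrepancy propagation:
`Γ Φ(T_k(b̂)) Υ(b̂) = (Γ Φ(T_k(b̄)) Υ(b̄)) exp_m((Ad_{Υ(b̄)⁻¹} F d_k)^∧) exp_m(δ^∧)`. -/
theorem stmt_16 (Δt : ℝ) (Tk Υ : M5) (hT : IsSE23 Tk) (hΥ : IsSE23 Υ)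
    (Γ : M5) (hΓ : IsUnit Γ) (d δ : V9) :
    Γ * Phi Δt (Tk * NormedSpace.exp (hat9 d)) * (Υ * NormedSpace.exp (hat9 δ))
      = (Γ * Phi Δt Tk * Υ)
          * NormedSpace.exp (hat9 (Ad Υ⁻¹ (Fmap Δt d)))
          * NormedSpace.exp (hat9 δ) :=
  stmt_16_general Δt Tk Υ hT hΥ Γ d δ
end
end
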